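/- Let V be a module over a commutative ring, φ : V → R a linear functional, and let ι_φ denote the interior product (the unique antiderivation of degree −1 on the exterior algebra Λ V extending φ). For vectors v₀, …, v_{p+q} ∈ V one has ι_φ(v₀ ∧ ⋯ ∧ v_p) ∧ ι_φ(v_p ∧ ⋯ ∧ v_{p+q}) = φ(v_p) · ι_φ(v₀ ∧ ⋯ ∧ v_{p+q}). -/

import Mathlib

open ExteriorAlgebra

variable {R V : Type*} [CommRing R] [AddCommGroup V] [Module R V]

/-- The wedge product `v 0 ∧ ⋯ ∧ v (n-1)` in the exterior algebra. -/
noncomputable def wedge {n : ℕ} (v : Fin n → V) : ExteriorAlgebra R V :=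
  (List.ofFn fun j => ExteriorAlgebra.ι R (v j)).prod

/-- The interior product `ι_φ (v 0 ∧ ⋯ ∧ v n) = ∑ⱼ (-1)ʲ φ(vⱼ) v 0 ∧ ⋯ v̂ⱼ ⋯ ∧ v n`. -/
noncomputable def contrWedge (φ : V →ₗ[R] R) {n : ℕ} (v : Fin (n + 1) → V) :
    ExteriorAlgebra R V :=
  ∑ j : Fin (n + 1), ((-1 : ℤ) ^ (j : ℕ) * φ (v j)) •
    wedge (R := R) fun i : Fin n => v (j.succAbove i)


/-! The interior product `contrWedge φ` is `CliffordAlgebra.contractLeft φ` on the exterior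
algebra, the Clifford algebra of the zero form. Its antiderivation rule
`ι_φ(a ∧ x) = φ(a) x - a ∧ ι_φ(x)` gives, by induction on `x`,
`ι_φ(x ∧ b) ∧ ι_φ(b ∧ y) = φ(b) ι_φ(x ∧ b ∧ y)` for all `x`, `y` and every `b` with `b ∧ b = 0`:
in the inductive step the only new term is `x ∧ b ∧ ι_φ(b ∧ y) = φ(b) x ∧ b ∧ y`, because the
term `x ∧ b ∧ b ∧ ι_φ(y)` vanishes. The theorem is the case `x = v₀ ∧ ⋯ ∧ v_{p-1}`, `b = v_p`,
`y = v_{p+1} ∧ ⋯ ∧ v_{p+q}`. -/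

open CliffordAlgebra (contractLeft contractLeft_ι contractLeft_ι_mul)

theorem CliffordAlgebra.contractLeft_mul_ι_mul_contractLeft_ι_mul {Q : QuadraticForm R V}
    (φ : V →ₗ[R] R) {b : V} (hb : Q b = 0) (x y : CliffordAlgebra Q) :
    contractLeft φ (x * ι Q b) * contractLeft φ (ι Q b * y) =
      φ b • contractLeft φ (x * ι Q b * y) := by
  induction x using CliffordAlgebra.left_induction with
  | algebraMap r =>
    rw [← Algebra.smul_def, smul_mul_assoc, map_smul, map_smul, smul_mul_assoc, smul_comm,
      contractLeft_ι, ← Algebra.smul_def]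
  | add x x' hx hx' => simp only [add_mul, map_add, hx, hx', smul_add]
  | ι_mul x a hx =>
    have hxb : x * ι Q b * contractLeft φ (ι Q b * y) = φ b • (x * ι Q b * y) := by
      rw [contractLeft_ι_mul, mul_sub, mul_smul_comm, ← mul_assoc (x * ι Q b) (ι Q b),
        mul_assoc x (ι Q b) (ι Q b), ι_sq_scalar, hb, map_zero, mul_zero, zero_mul, sub_zero]
    rw [mul_assoc (ι Q a) x (ι Q b), mul_assoc (ι Q a) (x * ι Q b) y,
      contractLeft_ι_mul (a := a) (b := x * ι Q b),
      contractLeft_ι_mul (a := a) (b := x * ι Q b * y),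
      sub_mul, smul_mul_assoc, hxb, mul_assoc (ι Q a), hx, smul_sub, smul_comm, mul_smul_comm]

theorem wedge_zero (v : Fin 0 → V) : wedge (R := R) v = 1 := by
  rw [wedge, List.ofFn_zero, List.prod_nil]

theorem wedge_succ {n : ℕ} (v : Fin (n + 1) → V) :
    wedge (R := R) v = ι R (v 0) * wedge (R := R) (fun i => v i.succ) := by
  rw [wedge, List.ofFn_succ, List.prod_cons, wedge]

theorem wedge_succ' {n : ℕ} (v : Fin (n + 1) → V) :
    wedge (R := R) v = wedge (R := R) (fun i => v i.castSucc) * ι R (v (Fin.last n)) := by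
  rw [wedge, List.ofFn_succ', List.prod_concat, wedge]

theorem wedge_castAdd_mul_wedge_natAdd {m n : ℕ} (v : Fin (m + n) → V) :
    wedge (R := R) (fun i => v (Fin.castAdd n i)) * wedge (R := R) (fun i => v (Fin.natAdd m i)) =
      wedge (R := R) v := by
  rw [wedge, wedge, wedge, ← List.prod_append]
  exact congrArg List.prod (List.ofFn_add (f := fun j => ι R (v j))).symm

theorem contractLeft_wedge (φ : V →ₗ[R] R) {n : ℕ} (v : Fin (n + 1) → V) :
    contractLeft φ (wedge (R := R) v) = contrWedge φ v := by
  induction n with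
  | zero =>
    simp [contrWedge, wedge_succ v, wedge_zero, contractLeft_ι, Algebra.algebraMap_eq_smul_one]
  | succ n ih =>
    rw [contrWedge.eq_def φ v, Fin.sum_univ_succ, wedge_succ, contractLeft_ι_mul, ih, contrWedge,
      Finset.mul_sum, sub_eq_add_neg, ← Finset.sum_neg_distrib]
    congr 1
    · simp
    · refine Finset.sum_congr rfl fun j _ => ?_
      rw [wedge_succ, Fin.succ_succAbove_zero]
      simp only [Fin.succ_succAbove_succ, Fin.val_succ, pow_succ]
      rw [mul_smul_comm]
      push_cast
      module

/-- `ι_φ(v₀ ∧ ⋯ ∧ v_p) ∧ ι_φ(v_p ∧ ⋯ ∧ v_{p+q}) = φ(v_p) · ι_φ(v₀ ∧ ⋯ ∧ v_{p+q})`. -/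
theorem stmt9 (φ : V →ₗ[R] R) (p q : ℕ) (v : Fin (p + q + 1) → V) :
    contrWedge φ (fun i : Fin (p + 1) => v (Fin.castLE (by omega) i)) *
      contrWedge φ (fun i : Fin (q + 1) => v ⟨p + (i : ℕ), by omega⟩) =
    φ (v ⟨p, by omega⟩) • contrWedge φ v := by
  set b := v ⟨p, by omega⟩
  set x := wedge (R := R) fun i : Fin p => v (Fin.castLE (by omega) i)
  set y := wedge (R := R) fun i : Fin q => v ⟨p + (i : ℕ) + 1, by omega⟩
  have hx : wedge (R := R) (fun i : Fin (p + 1) => v (Fin.castLE (by omega) i)) = x * ι R b :=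
    wedge_succ' _
  have hy : wedge (R := R) (fun i : Fin (q + 1) => v ⟨p + (i : ℕ), by omega⟩) = ι R b * y :=
    wedge_succ _
  have hv : wedge (R := R) v = x * (ι R b * y) := by
    rw [← hy]
    -- `Fin (p + q + 1)` is `Fin (p + (q + 1))`, and the index maps agree definitionally.
    exact (wedge_castAdd_mul_wedge_natAdd (m := p) (n := q + 1) v).symm
  rw [← contractLeft_wedge, ← contractLeft_wedge, ← contractLeft_wedge, hx, hy, hv, ← mul_assoc]
  exact CliffordAlgebra.contractLeft_mul_ι_mul_contractLeft_ι_mul φ (Q := 0) rfl x y
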